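/- Suppose (Σ̄₁,…,Σ̄_{m̂+1}) is a tuple of symmetric p×p real matrices belonging to the restricted set O (i.e., Σ̄_{uv,j} = 0 for every j and every pair (u,v) with u ≠ v and (u,v) ∉ S_j) that minimizes the block-wise criterion F over O. Suppose moreover that there exist real numbers Ē_{uv,1t} (1 ≤ u ≠ v ≤ p, 1 ≤ t ≤ T) and symmetric p×p matrices Ē_{2,T̂_j} (1 ≤ j ≤ m̂), with the conventions Ē_{2,T̂_0} := 0 and Ē_{2,T̂_{m̂+1}} := 0 and ξ_{2,T̂_0} := 0 and ξ_{2,T̂_{m̂+1}} := 0, satisfying: (a) Ē_{uv,1t} ∈ [−1,1] for all u ≠ v and t, and Ē_{uv,1t} = sgn(Σ̄_{uv,j}) whenever t ∈ B_j and Σ̄_{uv,j} ≠ 0; (b) ‖Ē_{2,T̂_j}‖_F ≤ 1 for all 1 ≤ j ≤ m̂, and Ē_{2,T̂_j} = (Σ̄_{j+1} − Σ̄_j)/‖Σ̄_{j+1} − Σ̄_j‖_F whenever Σ̄_{j+1} ≠ Σ̄_j; (c) for every 1 ≤ j ≤ m̂+1, (1/T)·∑_{t ∈ B_j} (Σ̄_j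 − X_t X_tᵀ) + λ₁·∑_{t ∈ B_j} M_t + λ₂·(ξ_{2,T̂_{j−1}}·Ē_{2,T̂_{j−1}} − ξ_{2,T̂_j}·Ē_{2,T̂_j}) = 0, where M_t is the p×p matrix with (u,v) entry ξ_{uv,1t}·Ē_{uv,1t} for u ≠ v and 0 on the diagonal; and (d) strict dual feasibility: for every j and every pair (u,v) with u ≠ v and (u,v) ∉ S_j, |∑_{t ∈ B_j} ξ_{uv,1t}·Ē_{uv,1t}| < ∑_{t ∈ B_j} ξ_{uv,1t}. Then every tuple (Σ̂₁,…,Σ̂_{m̂+1}) of symmetric p×p real matrices minimizing F over all tuples of symmetric p×p real matrices satisfies Σ̂_{uv,j} = 0 for every j = 1,…,m̂+1 and every pair (u,v) with u ≠ v and (u,v) ∉ S_j. -/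

import Mathlib

/-!
The certificate (a)–(c) says that `0` is a subgradient of `F` at `Σ̄` over all tuples, not only
over `O`. Pair the stationarity equation (c) of block `j` with `Δ_j = Σ_j - Σ̄_j`: the quadratic
loss contributes its gradient plus `|B_j|/(2T) ‖Δ_j‖²`, the entrywise penalty and the fusion
penalty dominate their linearisations at `Σ̄` (subgradient inequalities for `|·|` and `‖·‖_F`,
the fusion terms being regrouped block by block through summation by parts). Hence
`F(Σ) ≥ F(Σ̄) + ∑_j |B_j|/(2T) ‖Σ_j - Σ̄_j‖²`. All blocks are nonempty, so a global minimiser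
`Σ̂` has `F(Σ̂) ≤ F(Σ̄)` and must equal `Σ̄`, which vanishes off `S_j`.
-/

open Matrix Finset

/-- Frobenius norm of a real `p × p` matrix. -/
noncomputable def frob {p : ℕ} (A : Matrix (Fin p) (Fin p) ℝ) : ℝ :=
  Real.sqrt (∑ u, ∑ v, (A u v) ^ 2)

/-- The block-wise criterion `F` associated with the estimated change points
`1 = T̂₀ < T̂₁ < ⋯ < T̂_m < T̂_{m+1} = T+1`, with blocks
`B_j = {T̂_{j-1}, …, T̂_j - 1}` (here `Tc j` plays the role of `T̂_j` and `ξ2 j` the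
role of `ξ_{2,T̂_j}`). -/
noncomputable def blockCrit (p T m : ℕ) (X : ℕ → Fin p → ℝ) (lam1 lam2 : ℝ)
    (Tc : ℕ → ℕ) (ξ1 : Fin p → Fin p → ℕ → ℝ) (ξ2 : ℕ → ℝ)
    (Sig' : ℕ → Matrix (Fin p) (Fin p) ℝ) : ℝ :=
  ∑ j ∈ Finset.Icc 1 (m + 1), (1 / (2 * (T : ℝ))) *
      ∑ t ∈ Finset.Ico (Tc (j - 1)) (Tc j),
        (frob (Matrix.vecMulVec (X t) (X t) - Sig' j)) ^ 2
    + lam1 * ∑ j ∈ Finset.Icc 1 (m + 1), ∑ u, ∑ v,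
        (if u ≠ v then (∑ t ∈ Finset.Ico (Tc (j - 1)) (Tc j), ξ1 u v t) * |Sig' j u v|
          else 0)
    + lam2 * ∑ j ∈ Finset.Icc 1 m, ξ2 j * frob (Sig' (j + 1) - Sig' j)

open scoped InnerProductSpace

section InnerProductSpace

variable {E : Type*} [NormedAddCommGroup E] [InnerProductSpace ℝ E]

theorem sum_norm_sub_sq_eq {ι : Type*} (s : Finset ι) (a : ι → E) (x y : E) :
    ∑ t ∈ s, ‖a t - y‖ ^ 2
      = ∑ t ∈ s, ‖a t - x‖ ^ 2 + 2 * ⟪∑ t ∈ s, (x - a t), y - x⟫_ℝ + #s * ‖y - x‖ ^ 2 := by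
  have h (t : ι) : ‖a t - y‖ ^ 2 = ‖a t - x‖ ^ 2 + 2 * ⟪x - a t, y - x⟫_ℝ + ‖y - x‖ ^ 2 := by
    rw [show a t - y = (a t - x) - (y - x) by abel, norm_sub_sq_real, ← neg_sub x (a t),
      inner_neg_left]
    ring
  simp only [h, sum_add_distrib, sum_inner, ← mul_sum, sum_const, nsmul_eq_mul]

theorem norm_add_inner_le_norm_add {a e : E} (d : E) (he : ‖e‖ ≤ 1)
    (hea : a ≠ 0 → e = ‖a‖⁻¹ • a) : ‖a‖ + ⟪e, d⟫_ℝ ≤ ‖a + d‖ := by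
  have hinner : ⟪e, a⟫_ℝ = ‖a‖ := by
    rcases eq_or_ne a 0 with rfl | ha
    · simp
    · rw [hea ha, real_inner_smul_left, real_inner_self_eq_norm_sq]
      field_simp [norm_ne_zero_iff.mpr ha]
  calc ‖a‖ + ⟪e, d⟫_ℝ = ⟪e, a + d⟫_ℝ := by rw [inner_add_right, hinner]
    _ ≤ ‖e‖ * ‖a + d‖ := real_inner_le_norm _ _
    _ ≤ ‖a + d‖ := mul_le_of_le_one_left (norm_nonneg _) he

theorem sum_Icc_inner_sub_eq (f x : ℕ → E) (m : ℕ) :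
    ∑ k ∈ Icc 1 (m + 1), ⟪f (k - 1) - f k, x k⟫_ℝ
      = ⟪f 0, x 1⟫_ℝ - ⟪f (m + 1), x (m + 1)⟫_ℝ
        + ∑ k ∈ Icc 1 m, ⟪f k, x (k + 1) - x k⟫_ℝ := by
  induction m with
  | zero => simp [inner_sub_left]
  | succ m ih =>
    rw [sum_Icc_succ_top (by omega), ih, sum_Icc_succ_top (by omega)]
    simp only [inner_sub_left, inner_sub_right, Nat.add_sub_cancel]
    ring

theorem sum_mul_norm_sub_add_sum_inner_le {ξ : ℕ → ℝ} {e : ℕ → E} {m : ℕ}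
    (hξ : ∀ j ∈ Icc 1 m, 0 ≤ ξ j) (hξ0 : ξ 0 = 0) (hξlast : ξ (m + 1) = 0)
    {x : ℕ → E} (he : ∀ j ∈ Icc 1 m, ‖e j‖ ≤ 1)
    (hex : ∀ j ∈ Icc 1 m, x (j + 1) ≠ x j → e j = ‖x (j + 1) - x j‖⁻¹ • (x (j + 1) - x j))
    (y : ℕ → E) :
    ∑ j ∈ Icc 1 m, ξ j * ‖x (j + 1) - x j‖
        + ∑ k ∈ Icc 1 (m + 1), ⟪ξ (k - 1) • e (k - 1) - ξ k • e k, y k - x k⟫_ℝ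
      ≤ ∑ j ∈ Icc 1 m, ξ j * ‖y (j + 1) - y j‖ := by
  rw [sum_Icc_inner_sub_eq (fun k => ξ k • e k), hξ0, hξlast, zero_smul, zero_smul,
    inner_zero_left, inner_zero_left, sub_zero, zero_add, ← sum_add_distrib]
  refine sum_le_sum fun j hj => ?_
  have hjump := norm_add_inner_le_norm_add ((y (j + 1) - x (j + 1)) - (y j - x j)) (he j hj)
    fun h => hex j hj (sub_ne_zero.mp h)
  rw [show x (j + 1) - x j + ((y (j + 1) - x (j + 1)) - (y j - x j)) = y (j + 1) - y j by abel]
    at hjump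
  rw [real_inner_smul_left, ← mul_add]
  exact mul_le_mul_of_nonneg_left hjump (hξ j hj)

end InnerProductSpace

theorem abs_add_mul_le_abs_add {x e : ℝ} (d : ℝ) (he : |e| ≤ 1) (hex : x ≠ 0 → e = Real.sign x) :
    |x| + e * d ≤ |x + d| := by
  have hmul : e * x = |x| := by
    rcases lt_trichotomy x 0 with hx | rfl | hx
    · rw [hex hx.ne, Real.sign_of_neg hx, abs_of_neg hx, neg_one_mul]
    · simp
    · rw [hex hx.ne', Real.sign_of_pos hx, abs_of_pos hx, one_mul]
  calc |x| + e * d = e * (x + d) := by rw [← hmul]; ring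
    _ ≤ |e| * |x + d| := by rw [← abs_mul]; exact le_abs_self _
    _ ≤ |x + d| := mul_le_of_le_one_left (abs_nonneg _) he

noncomputable def frobVec {n : Type*} : Matrix n n ℝ →ₗ[ℝ] EuclideanSpace ℝ (n × n) where
  toFun A := WithLp.toLp 2 A.vec
  map_add' _ _ := rfl
  map_smul' _ _ := rfl

theorem ofLp_frobVec {n : Type*} (A : Matrix n n ℝ) : (frobVec A).ofLp = A.vec := rfl

theorem inner_frobVec {n : Type*} [Fintype n] (A B : Matrix n n ℝ) :
    ⟪frobVec A, frobVec B⟫_ℝ = ∑ u, ∑ v, A u v * B u v := by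
  simp only [PiLp.inner_apply, ofLp_frobVec, vec, Fintype.sum_prod_type, RCLike.inner_apply,
    conj_trivial, mul_comm]
  exact sum_comm

theorem frob_eq_norm_frobVec {p : ℕ} (A : Matrix (Fin p) (Fin p) ℝ) : frob A = ‖frobVec A‖ := by
  simp only [frob, EuclideanSpace.norm_eq, ofLp_frobVec, vec, Fintype.sum_prod_type,
    Real.norm_eq_abs, sq_abs]
  rw [sum_comm]

theorem sum_offDiag_mul_abs_add_inner_le {n ι : Type*} [Fintype n] [DecidableEq n]
    {s : Finset ι} {w e : n → n → ι → ℝ} {A : Matrix n n ℝ}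
    (hw : ∀ u v, u ≠ v → ∀ t ∈ s, 0 ≤ w u v t) (he : ∀ u v, u ≠ v → ∀ t ∈ s, |e u v t| ≤ 1)
    (heA : ∀ u v, u ≠ v → ∀ t ∈ s, A u v ≠ 0 → e u v t = Real.sign (A u v))
    (B : Matrix n n ℝ) :
    ∑ u, ∑ v, (if u ≠ v then (∑ t ∈ s, w u v t) * |A u v| else 0)
        + ⟪frobVec (∑ t ∈ s, of fun u v => if u = v then 0 else w u v t * e u v t),
            frobVec (B - A)⟫_ℝ
      ≤ ∑ u, ∑ v, (if u ≠ v then (∑ t ∈ s, w u v t) * |B u v| else 0) := by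
  rw [inner_frobVec, ← sum_add_distrib]
  refine sum_le_sum fun u _ => ?_
  rw [← sum_add_distrib]
  refine sum_le_sum fun v _ => ?_
  by_cases huv : u = v
  · simp [huv, Matrix.sum_apply]
  rw [if_pos huv, if_pos huv, Matrix.sum_apply, Matrix.sub_apply, sum_mul, sum_mul, sum_mul,
    ← sum_add_distrib]
  refine sum_le_sum fun t ht => ?_
  have h := abs_add_mul_le_abs_add (B u v - A u v) (he u v huv t ht) (heA u v huv t ht)
  rw [add_sub_cancel] at h
  simp only [of_apply, if_neg huv]
  calc w u v t * |A u v| + w u v t * e u v t * (B u v - A u v)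
      = w u v t * (|A u v| + e u v t * (B u v - A u v)) := by ring
    _ ≤ w u v t * |B u v| := mul_le_mul_of_nonneg_left h (hw u v huv t ht)

theorem blockCrit_add_sum_sq_le {p T m : ℕ} {X : ℕ → Fin p → ℝ} {lam1 lam2 : ℝ}
    (hlam1 : 0 ≤ lam1) (hlam2 : 0 ≤ lam2) {Tc : ℕ → ℕ} {ξ1 : Fin p → Fin p → ℕ → ℝ}
    {ξ2 : ℕ → ℝ} (hξ1 : ∀ j ∈ Icc 1 (m + 1), ∀ u v : Fin p, u ≠ v →
      ∀ t ∈ Ico (Tc (j - 1)) (Tc j), 0 ≤ ξ1 u v t)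
    (hξ2 : ∀ j ∈ Icc 1 m, 0 ≤ ξ2 j) (hξ20 : ξ2 0 = 0) (hξ2last : ξ2 (m + 1) = 0)
    {Sigbar : ℕ → Matrix (Fin p) (Fin p) ℝ} {E1 : Fin p → Fin p → ℕ → ℝ}
    {E2 : ℕ → Matrix (Fin p) (Fin p) ℝ}
    (ha : ∀ j ∈ Icc 1 (m + 1), ∀ u v : Fin p, u ≠ v →
      ∀ t ∈ Ico (Tc (j - 1)) (Tc j), |E1 u v t| ≤ 1)
    (ha' : ∀ j ∈ Icc 1 (m + 1), ∀ u v : Fin p, u ≠ v →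
      ∀ t ∈ Ico (Tc (j - 1)) (Tc j), Sigbar j u v ≠ 0 →
        E1 u v t = Real.sign (Sigbar j u v))
    (hb : ∀ j ∈ Icc 1 m, frob (E2 j) ≤ 1)
    (hb' : ∀ j ∈ Icc 1 m, Sigbar (j + 1) ≠ Sigbar j →
      E2 j = (frob (Sigbar (j + 1) - Sigbar j))⁻¹ • (Sigbar (j + 1) - Sigbar j))
    (hc : ∀ j ∈ Icc 1 (m + 1),
      (1 / (T : ℝ)) • (∑ t ∈ Ico (Tc (j - 1)) (Tc j), (Sigbar j - vecMulVec (X t) (X t)))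
      + lam1 • (∑ t ∈ Ico (Tc (j - 1)) (Tc j),
          (of fun u v => if u = v then (0 : ℝ) else ξ1 u v t * E1 u v t))
      + lam2 • (ξ2 (j - 1) • E2 (j - 1) - ξ2 j • E2 j) = 0)
    (Sighat : ℕ → Matrix (Fin p) (Fin p) ℝ) :
    blockCrit p T m X lam1 lam2 Tc ξ1 ξ2 Sigbar
        + ∑ j ∈ Icc 1 (m + 1),
            #(Ico (Tc (j - 1)) (Tc j)) / (2 * T : ℝ) * frob (Sighat j - Sigbar j) ^ 2
      ≤ blockCrit p T m X lam1 lam2 Tc ξ1 ξ2 Sighat := by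
  have hblock : ∀ j ∈ Icc 1 (m + 1),
      1 / (2 * (T : ℝ)) * ∑ t ∈ Ico (Tc (j - 1)) (Tc j),
          ‖frobVec (vecMulVec (X t) (X t)) - frobVec (Sigbar j)‖ ^ 2
        + lam1 * ∑ u, ∑ v, (if u ≠ v then
            (∑ t ∈ Ico (Tc (j - 1)) (Tc j), ξ1 u v t) * |Sigbar j u v| else 0)
        + #(Ico (Tc (j - 1)) (Tc j)) / (2 * T : ℝ) * ‖frobVec (Sighat j) - frobVec (Sigbar j)‖ ^ 2
        - lam2 * ⟪ξ2 (j - 1) • frobVec (E2 (j - 1)) - ξ2 j • frobVec (E2 j),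
            frobVec (Sighat j) - frobVec (Sigbar j)⟫_ℝ
      ≤ 1 / (2 * (T : ℝ)) * ∑ t ∈ Ico (Tc (j - 1)) (Tc j),
          ‖frobVec (vecMulVec (X t) (X t)) - frobVec (Sighat j)‖ ^ 2
        + lam1 * ∑ u, ∑ v, (if u ≠ v then
            (∑ t ∈ Ico (Tc (j - 1)) (Tc j), ξ1 u v t) * |Sighat j u v| else 0) := by
    intro j hj
    have hloss := sum_norm_sub_sq_eq (Ico (Tc (j - 1)) (Tc j))
      (fun t => frobVec (vecMulVec (X t) (X t))) (frobVec (Sigbar j)) (frobVec (Sighat j))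
    have hlasso := mul_le_mul_of_nonneg_left
      (sum_offDiag_mul_abs_add_inner_le (hξ1 j hj) (ha j hj) (ha' j hj) (Sighat j)) hlam1
    have hstat := congrArg (fun A => ⟪frobVec A, frobVec (Sighat j - Sigbar j)⟫_ℝ) (hc j hj)
    simp only [map_add, map_smul, map_sum, map_sub, map_zero, inner_add_left, real_inner_smul_left,
      inner_zero_left] at hstat hlasso
    linear_combination hlasso - hstat - (1 / (2 * (T : ℝ))) * hloss
  have hfused := mul_le_mul_of_nonneg_left (sum_mul_norm_sub_add_sum_inner_le hξ2 hξ20 hξ2last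
    (x := fun j => frobVec (Sigbar j)) (e := fun j => frobVec (E2 j))
    (fun j hj => frob_eq_norm_frobVec (E2 j) ▸ hb j hj)
    (fun j hj hne => by
      rw [hb' j hj fun h => hne (by rw [h]), map_smul, map_sub, frob_eq_norm_frobVec, map_sub])
    fun j => frobVec (Sighat j)) hlam2
  have hsum := sum_le_sum hblock
  simp only [sum_add_distrib, sum_sub_distrib, ← mul_sum] at hsum
  simp only [blockCrit, frob_eq_norm_frobVec, map_sub, ← mul_sum] at hfused ⊢
  linarith

theorem frob_eq_zero_iff {p : ℕ} {A : Matrix (Fin p) (Fin p) ℝ} : frob A = 0 ↔ A = 0 := by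
  rw [frob_eq_norm_frobVec, norm_eq_zero, ← vec_eq_zero_iff]
  exact WithLp.toLp_eq_zero 2

theorem Ico_subset_Icc_of_lt_succ {Tc : ℕ → ℕ} {m T : ℕ} (hT0 : Tc 0 = 1)
    (hTmono : ∀ j ≤ m, Tc j < Tc (j + 1)) (hTlast : Tc (m + 1) = T + 1) {j : ℕ}
    (hj : j ∈ Icc 1 (m + 1)) : Ico (Tc (j - 1)) (Tc j) ⊆ Icc 1 T := by
  have hmono : MonotoneOn Tc (Set.Iic (m + 1)) :=
    (strictMonoOn_Iic_of_lt_succ fun k hk => by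
      simpa using hTmono k (Nat.lt_succ_iff.mp hk)).monotoneOn
  rw [mem_Icc] at hj
  have hlow : Tc 0 ≤ Tc (j - 1) := hmono (by simp) (by simp; omega) (Nat.zero_le _)
  have hhigh : Tc j ≤ Tc (m + 1) := hmono (by simpa using hj.2) (by simp) hj.2
  intro t ht
  rw [mem_Ico] at ht
  rw [mem_Icc]
  omega

theorem stmt9_general (p T m : ℕ) (hT : 1 ≤ T)
    (X : ℕ → Fin p → ℝ) (lam1 lam2 : ℝ) (hlam1 : 0 ≤ lam1) (hlam2 : 0 < lam2)
    (Tc : ℕ → ℕ) (hT0 : Tc 0 = 1) (hTmono : ∀ j ≤ m, Tc j < Tc (j + 1))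
    (hTlast : Tc (m + 1) = T + 1)
    (ξ1 : Fin p → Fin p → ℕ → ℝ)
    (hξ1 : ∀ u v : Fin p, u ≠ v → ∀ t ∈ Finset.Icc 1 T, 0 < ξ1 u v t)
    (ξ2 : ℕ → ℝ) (hξ2 : ∀ j ∈ Finset.Icc 1 m, 0 < ξ2 j)
    (hξ20 : ξ2 0 = 0) (hξ2last : ξ2 (m + 1) = 0)
    (S : ℕ → Set (Fin p × Fin p))
    (Sigbar : ℕ → Matrix (Fin p) (Fin p) ℝ)
    (hsymm : ∀ j ∈ Finset.Icc 1 (m + 1), (Sigbar j).IsSymm)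
    (hO : ∀ j ∈ Finset.Icc 1 (m + 1), ∀ u v : Fin p, u ≠ v → (u, v) ∉ S j →
      Sigbar j u v = 0)
    (E1 : Fin p → Fin p → ℕ → ℝ) (E2 : ℕ → Matrix (Fin p) (Fin p) ℝ)
    -- (a) entrywise subgradients
    (ha : ∀ u v : Fin p, u ≠ v → ∀ t ∈ Finset.Icc 1 T, -1 ≤ E1 u v t ∧ E1 u v t ≤ 1)
    (ha' : ∀ j ∈ Finset.Icc 1 (m + 1), ∀ u v : Fin p, u ≠ v →
      ∀ t ∈ Finset.Ico (Tc (j - 1)) (Tc j), Sigbar j u v ≠ 0 →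
        E1 u v t = Real.sign (Sigbar j u v))
    -- (b) fused subgradients
    (hb : ∀ j ∈ Finset.Icc 1 m, frob (E2 j) ≤ 1)
    (hb' : ∀ j ∈ Finset.Icc 1 m, Sigbar (j + 1) ≠ Sigbar j →
      E2 j = (frob (Sigbar (j + 1) - Sigbar j))⁻¹ • (Sigbar (j + 1) - Sigbar j))
    -- (c) block-wise stationarity
    (hc : ∀ j ∈ Finset.Icc 1 (m + 1),
      (1 / (T : ℝ)) • (∑ t ∈ Finset.Ico (Tc (j - 1)) (Tc j),
          (Sigbar j - Matrix.vecMulVec (X t) (X t)))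
      + lam1 • (∑ t ∈ Finset.Ico (Tc (j - 1)) (Tc j),
          (Matrix.of fun u v => if u = v then (0 : ℝ) else ξ1 u v t * E1 u v t))
      + lam2 • (ξ2 (j - 1) • E2 (j - 1) - ξ2 j • E2 j) = 0) :
    ∀ Sighat : ℕ → Matrix (Fin p) (Fin p) ℝ,
      (∀ j ∈ Finset.Icc 1 (m + 1), (Sighat j).IsSymm) →
      (∀ Sig' : ℕ → Matrix (Fin p) (Fin p) ℝ,
        (∀ j ∈ Finset.Icc 1 (m + 1), (Sig' j).IsSymm) →
        blockCrit p T m X lam1 lam2 Tc ξ1 ξ2 Sighat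
          ≤ blockCrit p T m X lam1 lam2 Tc ξ1 ξ2 Sig') →
      ∀ j ∈ Finset.Icc 1 (m + 1), ∀ u v : Fin p, u ≠ v → (u, v) ∉ S j →
        Sighat j u v = 0 := by
  intro Sighat _ hSighat j hj u v huv hS
  have hblock k (hk : k ∈ Icc 1 (m + 1)) := Ico_subset_Icc_of_lt_succ hT0 hTmono hTlast hk
  have hgap := blockCrit_add_sum_sq_le hlam1 hlam2.le
    (fun k hk u v huv t ht => (hξ1 u v huv t (hblock k hk ht)).le) (fun k hk => (hξ2 k hk).le)
    hξ20 hξ2last (fun k hk u v huv t ht => abs_le.mpr (ha u v huv t (hblock k hk ht)))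
    ha' hb hb' hc Sighat
  have hterm : ∀ k ∈ Icc 1 (m + 1),
      0 ≤ #(Ico (Tc (k - 1)) (Tc k)) / (2 * T : ℝ) * frob (Sighat k - Sigbar k) ^ 2 :=
    fun k _ => by positivity
  have hzero := (sum_eq_zero_iff_of_nonneg hterm).mp (le_antisymm
    (by linarith [hSighat Sigbar hsymm]) (sum_nonneg hterm)) j hj
  have hcoef : (0 : ℝ) < #(Ico (Tc (j - 1)) (Tc j)) / (2 * T) := by
    have hne := hTmono (j - 1) (by simp at hj; omega)
    rw [Nat.sub_add_cancel (mem_Icc.mp hj).1] at hne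
    positivity
  have hdiff : Sighat j - Sigbar j = 0 := frob_eq_zero_iff.mp
    (pow_eq_zero_iff two_ne_zero |>.mp ((mul_eq_zero.mp hzero).resolve_left hcoef.ne'))
  simpa [hO j hj u v huv hS, sub_eq_zero] using congrFun (congrFun hdiff u) v

/-- if a restricted (sparsity-constrained) minimizer of the block-wise
criterion admits a dual certificate with strict dual feasibility on the inactive
coordinates, then every unrestricted minimizer vanishes on the inactive coordinates. -/
theorem stmt9 (p T m : ℕ) (hp : 1 ≤ p) (hT : 1 ≤ T)
    (X : ℕ → Fin p → ℝ) (lam1 lam2 : ℝ) (hlam1 : 0 ≤ lam1) (hlam2 : 0 < lam2)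
    (Tc : ℕ → ℕ) (hT0 : Tc 0 = 1) (hTmono : ∀ j ≤ m, Tc j < Tc (j + 1))
    (hTlast : Tc (m + 1) = T + 1)
    (ξ1 : Fin p → Fin p → ℕ → ℝ)
    (hξ1 : ∀ u v : Fin p, u ≠ v → ∀ t ∈ Finset.Icc 1 T, 0 < ξ1 u v t)
    (ξ2 : ℕ → ℝ) (hξ2 : ∀ j ∈ Finset.Icc 1 m, 0 < ξ2 j)
    (hξ20 : ξ2 0 = 0) (hξ2last : ξ2 (m + 1) = 0)
    (S : ℕ → Set (Fin p × Fin p))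
    (Sigbar : ℕ → Matrix (Fin p) (Fin p) ℝ)
    (hsymm : ∀ j ∈ Finset.Icc 1 (m + 1), (Sigbar j).IsSymm)
    (hO : ∀ j ∈ Finset.Icc 1 (m + 1), ∀ u v : Fin p, u ≠ v → (u, v) ∉ S j →
      Sigbar j u v = 0)
    (hmin : ∀ Sig' : ℕ → Matrix (Fin p) (Fin p) ℝ,
      (∀ j ∈ Finset.Icc 1 (m + 1), (Sig' j).IsSymm) →
      (∀ j ∈ Finset.Icc 1 (m + 1), ∀ u v : Fin p, u ≠ v → (u, v) ∉ S j →
        Sig' j u v = 0) →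
      blockCrit p T m X lam1 lam2 Tc ξ1 ξ2 Sigbar
        ≤ blockCrit p T m X lam1 lam2 Tc ξ1 ξ2 Sig')
    (E1 : Fin p → Fin p → ℕ → ℝ) (E2 : ℕ → Matrix (Fin p) (Fin p) ℝ)
    (hE20 : E2 0 = 0) (hE2last : E2 (m + 1) = 0)
    (hE2symm : ∀ j ∈ Finset.Icc 1 m, (E2 j).IsSymm)
    -- (a) entrywise subgradients
    (ha : ∀ u v : Fin p, u ≠ v → ∀ t ∈ Finset.Icc 1 T, -1 ≤ E1 u v t ∧ E1 u v t ≤ 1)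
    (ha' : ∀ j ∈ Finset.Icc 1 (m + 1), ∀ u v : Fin p, u ≠ v →
      ∀ t ∈ Finset.Ico (Tc (j - 1)) (Tc j), Sigbar j u v ≠ 0 →
        E1 u v t = Real.sign (Sigbar j u v))
    -- (b) fused subgradients
    (hb : ∀ j ∈ Finset.Icc 1 m, frob (E2 j) ≤ 1)
    (hb' : ∀ j ∈ Finset.Icc 1 m, Sigbar (j + 1) ≠ Sigbar j →
      E2 j = (frob (Sigbar (j + 1) - Sigbar j))⁻¹ • (Sigbar (j + 1) - Sigbar j))
    -- (c) block-wise stationarity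
    (hc : ∀ j ∈ Finset.Icc 1 (m + 1),
      (1 / (T : ℝ)) • (∑ t ∈ Finset.Ico (Tc (j - 1)) (Tc j),
          (Sigbar j - Matrix.vecMulVec (X t) (X t)))
      + lam1 • (∑ t ∈ Finset.Ico (Tc (j - 1)) (Tc j),
          (Matrix.of fun u v => if u = v then (0 : ℝ) else ξ1 u v t * E1 u v t))
      + lam2 • (ξ2 (j - 1) • E2 (j - 1) - ξ2 j • E2 j) = 0)
    -- (d) strict dual feasibility on inactive coordinates
    (hd : ∀ j ∈ Finset.Icc 1 (m + 1), ∀ u v : Fin p, u ≠ v → (u, v) ∉ S j →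
      |∑ t ∈ Finset.Ico (Tc (j - 1)) (Tc j), ξ1 u v t * E1 u v t|
        < ∑ t ∈ Finset.Ico (Tc (j - 1)) (Tc j), ξ1 u v t) :
    ∀ Sighat : ℕ → Matrix (Fin p) (Fin p) ℝ,
      (∀ j ∈ Finset.Icc 1 (m + 1), (Sighat j).IsSymm) →
      (∀ Sig' : ℕ → Matrix (Fin p) (Fin p) ℝ,
        (∀ j ∈ Finset.Icc 1 (m + 1), (Sig' j).IsSymm) →
        blockCrit p T m X lam1 lam2 Tc ξ1 ξ2 Sighat
          ≤ blockCrit p T m X lam1 lam2 Tc ξ1 ξ2 Sig') →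
      ∀ j ∈ Finset.Icc 1 (m + 1), ∀ u v : Fin p, u ≠ v → (u, v) ∉ S j →
        Sighat j u v = 0 :=
  stmt9_general p T m hT X lam1 lam2 hlam1 hlam2 Tc hT0 hTmono hTlast ξ1 hξ1 ξ2 hξ2 hξ20 hξ2last S
    Sigbar hsymm hO E1 E2 ha ha' hb hb' hc
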